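/- Numerical core of Claim 5.2, Case 2 (nef-Fano enlarged-cylinder reduction): Let R > 1 and let χ ∈ M_ℝ satisfy ⟨λ', χ − θ⟩ = R·D/2 and −η_0/2 ≤ ⟨λ_0, χ − θ⟩ < −Q. Let S ⊆ {1, …, n} be nonempty with ⟨λ', β_i⟩ ≥ 0 for all i ∈ S, and set μ := χ − ∑_{i∈S} β_i. Then: (a) |⟨λ_0, μ − θ⟩| ≤ η_0/2; (b) ⟨λ', μ − θ⟩ ≥ (R/2 − 1)·D > −R·D/2; (c) if ⟨λ', β_i⟩ > 0 for some i ∈ S, then ⟨λ', μ − θ⟩ < R·D/2; (d) if ⟨λ', β_i⟩ = 0 for all i ∈ S, then ⟨λ', μ − θ⟩ = R·D/2 and ⟨λ_0, μ − θ⟩ > ⟨λ_0, χ − θ⟩. -/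

import Mathlib

noncomputable section

/-- The standard pairing between `N_ℝ = ℝ²` and `M_ℝ = ℝ²`. -/
def pairR (lam chi : Fin 2 → ℝ) : ℝ := ∑ k, lam k * chi k

/-- `D := −∑_{i : ⟨λ', β_i⟩ ≤ 0} ⟨λ', β_i⟩`. -/
def Dval {n : ℕ} (β : Fin n → Fin 2 → ℝ) (lam' : Fin 2 → ℝ) : ℝ :=
  -∑ i ∈ Finset.univ.filter (fun i => pairR lam' (β i) ≤ 0), pairR lam' (β i)

/-- `Q := η_0/2 + ∑_{i : ⟨λ', β_i⟩ < 0} ⟨λ_0, β_i⟩`, where `η_0 = −∑_i ⟨λ_0, β_i⟩`. -/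
def Qval {n : ℕ} (β : Fin n → Fin 2 → ℝ) (lam0 lam' : Fin 2 → ℝ) : ℝ :=
  (-∑ i, pairR lam0 (β i)) / 2 +
    ∑ i ∈ Finset.univ.filter (fun i => pairR lam' (β i) < 0), pairR lam0 (β i)

/-!
Since `∑ i, ⟨λ', β_i⟩ = 0`, the number `D` (the total negative part of the `⟨λ', β_i⟩`) is also
their total positive part. Hence it bounds `∑_{i ∈ S} ⟨λ', β_i⟩` from above, and it is positive
because the `β_i` span and `λ' ≠ 0`. For the `λ_0`-bound, `S` is disjoint from
`{i | ⟨λ', β_i⟩ < 0}` and every `⟨λ_0, β_i⟩` is negative, so subtracting both partial sums from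
`-η_0/2` gives at most `-η_0/2 + η_0 = η_0/2`.
-/

open Finset

lemma pairR_eq_dotProduct (l v : Fin 2 → ℝ) : pairR l v = l ⬝ᵥ v := rfl

lemma pairR_sub (l a b : Fin 2 → ℝ) : pairR l (a - b) = pairR l a - pairR l b := by
  simp only [pairR_eq_dotProduct, dotProduct_sub]

lemma pairR_sum {n : ℕ} (l : Fin 2 → ℝ) (S : Finset (Fin n)) (β : Fin n → Fin 2 → ℝ) :
    pairR l (∑ i ∈ S, β i) = ∑ i ∈ S, pairR l (β i) := by
  simp only [pairR_eq_dotProduct, dotProduct_sum]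

lemma exists_pairR_ne_zero_of_span_eq_top {n : ℕ} {β : Fin n → Fin 2 → ℝ}
    (hspan : Submodule.span ℝ (Set.range β) = ⊤) {l : Fin 2 → ℝ} (hl : l ≠ 0) :
    ∃ i, pairR l (β i) ≠ 0 := by
  by_contra! h
  have hker : ∀ v ∈ Submodule.span ℝ (Set.range β), l ⬝ᵥ v = 0 := by
    intro v hv
    induction hv using Submodule.span_induction with
    | mem _ hx => obtain ⟨i, rfl⟩ := hx; exact h i
    | zero => exact dotProduct_zero l
    | add _ _ _ _ hx hy => rw [dotProduct_add, hx, hy, add_zero]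
    | smul a _ _ hx => rw [dotProduct_smul, hx, smul_zero]
  exact hl (dotProduct_self_eq_zero.1 (hker l (hspan ▸ Submodule.mem_top)))

section NegPart

variable {ι : Type*} [Fintype ι] (f : ι → ℝ)

lemma neg_sum_filter_nonpos_eq_sum_negPart :
    -∑ i ∈ univ.filter (fun i => f i ≤ 0), f i = ∑ i, (f i)⁻ := by
  rw [sum_filter, ← sum_neg_distrib]
  refine sum_congr rfl fun i _ => ?_
  rw [negPart_eq_ite]
  split_ifs <;> simp

variable {f}

lemma sum_posPart_eq_sum_negPart_of_sum_eq_zero (h : ∑ i, f i = 0) :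
    ∑ i, (f i)⁺ = ∑ i, (f i)⁻ := by
  rw [← sub_eq_zero, ← sum_sub_distrib, ← h]
  exact sum_congr rfl fun i _ => posPart_sub_negPart (f i)

lemma sum_negPart_pos_of_sum_eq_zero (h : ∑ i, f i = 0) (hf : ∃ i, f i ≠ 0) :
    0 < ∑ i, (f i)⁻ := by
  obtain ⟨j, hj⟩ := hf
  have habs : 0 < ∑ i, |f i| :=
    sum_pos' (fun i _ => abs_nonneg (f i)) ⟨j, mem_univ j, abs_pos.2 hj⟩
  simp only [← posPart_add_negPart, sum_add_distrib,
    sum_posPart_eq_sum_negPart_of_sum_eq_zero h] at habs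
  linarith

lemma sum_le_sum_negPart_of_sum_eq_zero (h : ∑ i, f i = 0) {S : Finset ι}
    (hS : ∀ i ∈ S, 0 ≤ f i) : ∑ i ∈ S, f i ≤ ∑ i, (f i)⁻ :=
  calc ∑ i ∈ S, f i = ∑ i ∈ S, (f i)⁺ :=
        sum_congr rfl fun i hi => (posPart_eq_self.2 (hS i hi)).symm
    _ ≤ ∑ i, (f i)⁺ := sum_le_univ_sum_of_nonneg fun i => posPart_nonneg (f i)
    _ = ∑ i, (f i)⁻ := sum_posPart_eq_sum_negPart_of_sum_eq_zero h

end NegPart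

section Dval

variable {n : ℕ} {β : Fin n → Fin 2 → ℝ} {l : Fin 2 → ℝ}

lemma Dval_eq_sum_negPart : Dval β l = ∑ i, (pairR l (β i))⁻ :=
  neg_sum_filter_nonpos_eq_sum_negPart _

lemma Dval_pos (hspan : Submodule.span ℝ (Set.range β) = ⊤) (hl : l ≠ 0)
    (hω : pairR l (∑ i, β i) = 0) : 0 < Dval β l := by
  rw [Dval_eq_sum_negPart]
  exact sum_negPart_pos_of_sum_eq_zero (pairR_sum l univ β ▸ hω)
    (exists_pairR_ne_zero_of_span_eq_top hspan hl)

lemma sum_pairR_le_Dval (hω : pairR l (∑ i, β i) = 0) {S : Finset (Fin n)}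
    (hS : ∀ i ∈ S, 0 ≤ pairR l (β i)) : ∑ i ∈ S, pairR l (β i) ≤ Dval β l := by
  rw [Dval_eq_sum_negPart]
  exact sum_le_sum_negPart_of_sum_eq_zero (pairR_sum l univ β ▸ hω) hS

end Dval

lemma neg_Qval_sub_sum_le {n : ℕ} {β : Fin n → Fin 2 → ℝ} {lam0 lam' : Fin 2 → ℝ}
    (hlam0 : ∀ i, pairR lam0 (β i) < 0) {S : Finset (Fin n)}
    (hS : ∀ i ∈ S, 0 ≤ pairR lam' (β i)) :
    -Qval β lam0 lam' - ∑ i ∈ S, pairR lam0 (β i) ≤ (-∑ i, pairR lam0 (β i)) / 2 := by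
  set B := univ.filter fun i => pairR lam' (β i) < 0
  have hdisj : Disjoint B S := disjoint_left.2 fun i hiB hiS =>
    (mem_filter.1 hiB).2.not_ge (hS i hiS)
  have hsub : ∑ i ∈ B ∪ S, -pairR lam0 (β i) ≤ ∑ i, -pairR lam0 (β i) :=
    sum_le_univ_sum_of_nonneg fun i => (neg_pos.2 (hlam0 i)).le
  rw [sum_union hdisj] at hsub
  simp only [sum_neg_distrib] at hsub
  simp only [Qval]
  linarith

theorem claim_5_2_case_2_general {n : ℕ}
    (β : Fin n → Fin 2 → ℝ)
    (hspan : Submodule.span ℝ (Set.range β) = ⊤)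
    (lam0 : Fin 2 → ℝ) (hlam0 : ∀ i, pairR lam0 (β i) < 0)
    (lam' : Fin 2 → ℝ) (hlam'ne : lam' ≠ 0)
    (hlam'ω : pairR lam' (∑ i, β i) = 0)
    (θ : Fin 2 → ℝ)
    (R : ℝ) (hR : 1 < R)
    (χ : Fin 2 → ℝ)
    (hχ1 : pairR lam' (χ - θ) = R * Dval β lam' / 2)
    (hχ2 : -((-∑ i, pairR lam0 (β i)) / 2) ≤ pairR lam0 (χ - θ))
    (hχ3 : pairR lam0 (χ - θ) < -Qval β lam0 lam')
    (S : Finset (Fin n)) (hS : S.Nonempty)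
    (hSnonneg : ∀ i ∈ S, 0 ≤ pairR lam' (β i))
    (μ : Fin 2 → ℝ) (hμ : μ = χ - ∑ i ∈ S, β i) :
    |pairR lam0 (μ - θ)| ≤ (-∑ i, pairR lam0 (β i)) / 2 ∧
      ((R / 2 - 1) * Dval β lam' ≤ pairR lam' (μ - θ) ∧
        -(R * Dval β lam' / 2) < (R / 2 - 1) * Dval β lam') ∧
      ((∃ i ∈ S, 0 < pairR lam' (β i)) → pairR lam' (μ - θ) < R * Dval β lam' / 2) ∧
      ((∀ i ∈ S, pairR lam' (β i) = 0) →
        pairR lam' (μ - θ) = R * Dval β lam' / 2 ∧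
          pairR lam0 (χ - θ) < pairR lam0 (μ - θ)) := by
  have hpair (l : Fin 2 → ℝ) :
      pairR l (μ - θ) = pairR l (χ - θ) - ∑ i ∈ S, pairR l (β i) := by
    rw [hμ, sub_right_comm, pairR_sub, pairR_sum]
  have hD := Dval_pos hspan hlam'ne hlam'ω
  have hSD := sum_pairR_le_Dval hlam'ω hSnonneg
  have hS0 : ∑ i ∈ S, pairR lam0 (β i) < 0 := sum_neg (fun i _ => hlam0 i) hS
  have hQ := neg_Qval_sub_sum_le hlam0 hSnonneg
  rw [hpair lam0, hpair lam', hχ1]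
  refine ⟨abs_le.2 ⟨by linarith, by linarith⟩, ⟨by linarith, by nlinarith⟩, ?_, fun h0 => ?_⟩
  · rintro ⟨j, hjS, hj⟩
    linarith [single_le_sum hSnonneg hjS]
  · rw [sum_eq_zero h0]
    constructor <;> linarith

/-- numerical core of Claim 5.2, Case 2. -/
theorem claim_5_2_case_2 {n : ℕ} (hn : 1 ≤ n)
    (β : Fin n → Fin 2 → ℝ)
    (hβint : ∀ i, ∃ b : Fin 2 → ℤ, β i = fun k => ((b k : ℝ)))
    (hspan : Submodule.span ℝ (Set.range β) = ⊤)
    (lam0 : Fin 2 → ℝ) (hlam0 : ∀ i, pairR lam0 (β i) < 0)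
    (lam' : Fin 2 → ℝ) (hlam'ne : lam' ≠ 0)
    (hlam'ω : pairR lam' (∑ i, β i) = 0)
    (θ : Fin 2 → ℝ)
    (R : ℝ) (hR : 1 < R)
    (χ : Fin 2 → ℝ)
    (hχ1 : pairR lam' (χ - θ) = R * Dval β lam' / 2)
    (hχ2 : -((-∑ i, pairR lam0 (β i)) / 2) ≤ pairR lam0 (χ - θ))
    (hχ3 : pairR lam0 (χ - θ) < -Qval β lam0 lam')
    (S : Finset (Fin n)) (hS : S.Nonempty)
    (hSnonneg : ∀ i ∈ S, 0 ≤ pairR lam' (β i))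
    (μ : Fin 2 → ℝ) (hμ : μ = χ - ∑ i ∈ S, β i) :
    |pairR lam0 (μ - θ)| ≤ (-∑ i, pairR lam0 (β i)) / 2 ∧
      ((R / 2 - 1) * Dval β lam' ≤ pairR lam' (μ - θ) ∧
        -(R * Dval β lam' / 2) < (R / 2 - 1) * Dval β lam') ∧
      ((∃ i ∈ S, 0 < pairR lam' (β i)) → pairR lam' (μ - θ) < R * Dval β lam' / 2) ∧
      ((∀ i ∈ S, pairR lam' (β i) = 0) →
        pairR lam' (μ - θ) = R * Dval β lam' / 2 ∧
          pairR lam0 (χ - θ) < pairR lam0 (μ - θ)) :=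
  claim_5_2_case_2_general β hspan lam0 hlam0 lam' hlam'ne hlam'ω θ R hR χ hχ1 hχ2 hχ3 S hS hSnonneg
    μ hμ
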